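/- arXiv:1210.2623 — 4 statements merged into one kernel-verified Lean document; each statement's English description precedes it below -/
import Mathlib

section
/- Let K be a compact subset of a metric space H, let {R_a : H → H ∪ {∞}}_{a ∈ A} be a family of maps indexed by a set A, continuous on their domains, and suppose each R_a depends continuously on a parameter g in a metric space G, uniformly on compact sets. Assume for a fixed g_0 ∈ G and every p ∈ K there exists a(p) ∈ A with R_{a(p)}^{g_0}(p) in the interior of K. Then there exists δ > 0 such that for every g with d(g, g_0) < δ and every p ∈ K there exists a ∈ A with R_a^g(p) ∈ int(K). -/
open Filter Topology

/-- Tube lemma: one `a` serves a whole product neighbourhood of each `(x₀, y)`, and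
compactness of `K` makes the neighbourhood of `x₀` uniform in `y`. -/
theorem IsCompact.eventually_forall_exists_mem_of_continuous
    {X Y Z A : Type*} [TopologicalSpace X] [TopologicalSpace Y] [TopologicalSpace Z]
    {K : Set Y} (hK : IsCompact K) {U : Set Z} (hU : IsOpen U) {F : A → X → Y → Z}
    (hF : ∀ a, Continuous (fun z : X × Y => F a z.1 z.2)) {x₀ : X}
    (h : ∀ y ∈ K, ∃ a, F a x₀ y ∈ U) :
    ∀ᶠ x in 𝓝 x₀, ∀ y ∈ K, ∃ a, F a x y ∈ U := by
  refine hK.eventually_forall_of_forall_eventually fun y hy => ?_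
  obtain ⟨a, ha⟩ := h y hy
  exact ((hF a).continuousAt.eventually_mem (hU.mem_nhds ha)).mono fun _ hz => ⟨a, hz⟩

/-- Robustness of the criterion of the recurrent compact set: if for the parameter `g₀`
every point of the compact set `K` is sent into the interior of `K` by some
renormalization operator `R a g₀`, and the operators depend jointly continuously on
the parameter and the point, then the same holds for every parameter `δ`-close to
`g₀`, for some `δ > 0`. -/
theorem stmt2 {H G A : Type*} [MetricSpace H] [MetricSpace G]
    (K : Set H) (hK : IsCompact K)
    (R : A → G → H → H)
    (hcont : ∀ a : A, Continuous (fun p : G × H => R a p.1 p.2))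
    (g₀ : G)
    (hrec : ∀ p ∈ K, ∃ a : A, R a g₀ p ∈ interior K) :
    ∃ δ > (0 : ℝ), ∀ g : G, dist g g₀ < δ → ∀ p ∈ K, ∃ a : A, R a g p ∈ interior K :=
  Metric.eventually_nhds_iff.1 <|
    hK.eventually_forall_exists_mem_of_continuous isOpen_interior hcont hrec
end

section
/- Let ν be a finite Borel measure on ℝ such that the lower density D̲(ν,x) = liminf_{r→0} ν(B_r(x))/(2r) satisfies ∫ D̲(ν,x) dν(x) < ∞. Then ν is absolutely continuous with respect to Lebesgue measure, its density D(ν,x) = lim_{r↓0} ν(B_r(x))/(2r) exists Lebesgue-a.e. on the support, equals the Radon–Nikodym derivative dν/dLeb a.e., and ∫ |dν/dLeb|² dLeb = ∫ D̲(ν,x) dν(x). -/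
/-!
Write `D̲ν(x)` for the lower density. Where `D̲ν(x) < c`, arbitrarily small balls around `x` have
`ν`-measure at most `2c` times their length, so by the Besicovitch covering theorem
`ν (A ∩ {D̲ν < c}) ≤ 2c · Leb A`. Hence on a Lebesgue-null set `A` the lower density is `ν`-a.e.
infinite, and `∞ · ν A ≤ ∫ D̲ν dν < ∞` forces `ν A = 0`. Once `ν ≪ Leb`, balls and closed balls
have the same `ν`-measure, so the Besicovitch differentiation theorem identifies the limit of
`ν (B_r(x)) / 2r` with `dν/dLeb`, and `∫ (dν/dLeb)² dLeb = ∫ dν/dLeb dν = ∫ D̲ν dν`.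
-/

open MeasureTheory Filter Metric Set Topology
open scoped ENNReal NNReal

theorem Besicovitch.measure_le_of_frequently_closedBall_le {α : Type*} [MetricSpace α]
    [MeasurableSpace α] [BorelSpace α] [SecondCountableTopology α] [HasBesicovitchCovering α]
    (ρ μ : Measure α) [SFinite ρ] [IsLocallyFiniteMeasure μ] (s : Set α)
    (hs : ∀ x ∈ s, ∃ᶠ r in 𝓝[>] 0, ρ (closedBall x r) ≤ μ (closedBall x r)) :
    ρ s ≤ μ s :=
  (Besicovitch.vitaliFamily ρ).measure_le_of_frequently_le μ (Measure.AbsolutelyContinuous.refl ρ)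
    s fun x hx => (Besicovitch.tendsto_filterAt ρ x).frequently (hs x hx)

section HaarBalls

variable {E : Type*} [NormedAddCommGroup E] [NormedSpace ℝ E] [FiniteDimensional ℝ E]
  [Nontrivial E] [MeasurableSpace E] [BorelSpace E] (μ : Measure E) [μ.IsAddHaarMeasure]

theorem MeasureTheory.Measure.AbsolutelyContinuous.measure_closedBall_eq_measure_ball
    {ν : Measure E} (hν : ν ≪ μ) (x : E) (r : ℝ) : ν (closedBall x r) = ν (ball x r) := by
  rw [← ball_union_sphere]
  exact measure_congr (union_ae_eq_left_of_ae_eq_empty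
    (ae_eq_empty.2 (hν (Measure.addHaar_sphere μ x r))))

theorem ae_tendsto_measure_ball_div_of_absolutelyContinuous (ν : Measure E)
    [IsLocallyFiniteMeasure ν] (hν : ν ≪ μ) :
    ∀ᵐ x ∂μ, Tendsto (fun r => ν (ball x r) / μ (ball x r)) (𝓝[>] 0)
      (𝓝 (ν.rnDeriv μ x)) := by
  filter_upwards [Besicovitch.ae_tendsto_rnDeriv ν μ] with x hx
  refine hx.congr fun r => ?_
  rw [hν.measure_closedBall_eq_measure_ball μ, Measure.addHaar_closedBall_eq_addHaar_ball]

end HaarBalls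

theorem lintegral_rnDeriv_sq {α : Type*} [MeasurableSpace α] {ν μ : Measure α}
    [ν.HaveLebesgueDecomposition μ] (hνμ : ν ≪ μ) :
    ∫⁻ x, ν.rnDeriv μ x ^ 2 ∂μ = ∫⁻ x, ν.rnDeriv μ x ∂ν := by
  simp_rw [sq]
  exact lintegral_rnDeriv_mul hνμ (Measure.measurable_rnDeriv ν μ).aemeasurable

namespace MeasureTheory.Measure

noncomputable def lowerDensity (ν : Measure ℝ) (x : ℝ) : ℝ≥0∞ :=
  liminf (fun r : ℝ => ν (ball x r) / ENNReal.ofReal (2 * r)) (𝓝[>] 0)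

variable (ν : Measure ℝ)

theorem frequently_measure_closedBall_le_of_lowerDensity_lt {x : ℝ} {c : ℝ≥0∞}
    (hc : ν.lowerDensity x < c) :
    ∃ᶠ r in 𝓝[>] 0, ν (closedBall x r) ≤ 2 * c * volume (closedBall x r) := by
  have hlt : ∃ᶠ r in 𝓝[>] (0 : ℝ), ν (ball x r) / ENNReal.ofReal (2 * r) < c :=
    frequently_lt_of_liminf_lt (by isBoundedDefault) hc
  have hhalf : Tendsto (fun r : ℝ => r / 2) (𝓝[>] 0) (𝓝[>] 0) :=
    tendsto_nhdsWithin_of_tendsto_nhds_of_eventually_within _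
      (((continuous_id.div_const 2).tendsto' 0 0 (by simp)).mono_left nhdsWithin_le_nhds)
      (eventually_nhdsWithin_of_forall fun _ hr => mem_Ioi.2 (half_pos hr))
  refine hhalf.frequently ((hlt.and_eventually self_mem_nhdsWithin).mono ?_)
  rintro r ⟨hr, hr0 : 0 < r⟩
  have h2r : ENNReal.ofReal (2 * r) ≠ 0 := by positivity
  calc ν (closedBall x (r / 2)) ≤ ν (ball x r) :=
        measure_mono (closedBall_subset_ball (half_lt_self hr0))
    _ ≤ c * ENNReal.ofReal (2 * r) := (ENNReal.div_le_iff h2r ENNReal.ofReal_ne_top).1 hr.le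
    _ = 2 * c * volume (closedBall x (r / 2)) := by
      rw [Real.volume_closedBall, mul_div_cancel₀ r two_ne_zero,
        ENNReal.ofReal_mul zero_le_two, ENNReal.ofReal_ofNat]
      ring

theorem measure_inter_lowerDensity_lt_top_eq_zero [SFinite ν] {A : Set ℝ}
    (hA : volume A = 0) : ν (A ∩ {x | ν.lowerDensity x < ∞}) = 0 := by
  have hsplit : A ∩ {x | ν.lowerDensity x < ∞} = ⋃ n : ℕ, A ∩ {x | ν.lowerDensity x < n} := by
    ext x
    simp only [mem_inter_iff, mem_ofPred_eq, mem_iUnion, exists_and_left, lt_top_iff_ne_top]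
    exact and_congr_right fun _ =>
      ⟨ENNReal.exists_nat_gt, fun ⟨n, hn⟩ => (hn.trans (ENNReal.natCast_lt_top n)).ne⟩
  rw [hsplit]
  refine measure_iUnion_null fun n => le_antisymm ?_ zero_le
  calc ν (A ∩ {x | ν.lowerDensity x < n})
      ≤ ((2 * n : ℝ≥0) • volume) (A ∩ {x | ν.lowerDensity x < n}) :=
        Besicovitch.measure_le_of_frequently_closedBall_le ν _ _ fun x hx =>
          (frequently_measure_closedBall_le_of_lowerDensity_lt ν hx.2).mono fun r hr => by
            simpa [ENNReal.smul_def] using hr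
    _ = 0 := by simp [measure_mono_null inter_subset_left hA]

theorem absolutelyContinuous_of_lintegral_lowerDensity_ne_top [SFinite ν]
    (hint : ∫⁻ x, ν.lowerDensity x ∂ν ≠ ∞) : ν ≪ volume := by
  refine AbsolutelyContinuous.mk fun A hA hA0 => ?_
  have htop : ∀ᵐ x ∂ν.restrict A, ν.lowerDensity x = ∞ := by
    rw [ae_restrict_iff' hA, ae_iff]
    refine measure_mono_null (fun x hx => ?_) (measure_inter_lowerDensity_lt_top_eq_zero ν hA0)
    simp only [mem_ofPred_eq, Classical.not_imp] at hx
    exact ⟨hx.1, lt_top_iff_ne_top.2 hx.2⟩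
  have hle : ∞ * ν A ≤ ∫⁻ x, ν.lowerDensity x ∂ν := calc
    ∞ * ν A = ∫⁻ x in A, ν.lowerDensity x ∂ν := by
      rw [lintegral_congr_ae htop, setLIntegral_const]
    _ ≤ ∫⁻ x, ν.lowerDensity x ∂ν := setLIntegral_le_lintegral A _
  by_contra hA
  exact hint (top_le_iff.1 (ENNReal.top_mul hA ▸ hle))

end MeasureTheory.Measure

/-- Mattila-type differentiation: if the lower density of a finite Borel measure `ν`
on `ℝ` is `ν`-integrable, then `ν ≪ Leb`, the density `lim_{r↓0} ν(B_r(x))/(2r)`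
exists Lebesgue-a.e. and equals the Radon–Nikodym derivative, and
`∫ |dν/dLeb|² dLeb = ∫ D̲(ν,x) dν(x)`. -/
theorem stmt5 (ν : Measure ℝ) [IsFiniteMeasure ν]
    (hint : ∫⁻ x, Filter.liminf
        (fun r : ℝ => ν (Metric.ball x r) / ENNReal.ofReal (2 * r))
        (nhdsWithin 0 (Set.Ioi 0)) ∂ν ≠ ⊤) :
    ν ≪ volume ∧
    (∀ᵐ x ∂volume, Filter.Tendsto
        (fun r : ℝ => ν (Metric.ball x r) / ENNReal.ofReal (2 * r))
        (nhdsWithin 0 (Set.Ioi 0)) (nhds (ν.rnDeriv volume x))) ∧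
    ∫⁻ x, (ν.rnDeriv volume x) ^ 2 ∂volume
      = ∫⁻ x, Filter.liminf
          (fun r : ℝ => ν (Metric.ball x r) / ENNReal.ofReal (2 * r))
          (nhdsWithin 0 (Set.Ioi 0)) ∂ν := by
  have hac : ν ≪ volume := ν.absolutelyContinuous_of_lintegral_lowerDensity_ne_top hint
  have hlim := ae_tendsto_measure_ball_div_of_absolutelyContinuous volume ν hac
  simp only [Real.volume_ball] at hlim
  refine ⟨hac, hlim, ?_⟩
  rw [lintegral_rnDeriv_sq hac]
  refine lintegral_congr_ae (hac.ae_le ?_)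
  filter_upwards [hlim] with x hx using hx.liminf_eq.symm
end

section
/- Let (T, 𝒯, Leb) be a probability parameter space, (Σ, μ) a probability space, and π^t : Σ → ℝ measurable maps jointly measurable in (t, θ). Suppose {A_β}_β is a countable measurable partition-like family of Σ × Σ (indexed by words β of all lengths n ≥ 0), constants C > 0, 0 < λ < 1, x > 0, c > 1, and a function w : words → (0,∞) such that: (i) for (θ,τ) ∈ A_β with |β| = n, Leb{t : |π^t(θ) − π^t(τ)| ≤ r} ≤ C·r / w(β)^{1+ε₀/4} for all r > 0; (ii) w(β)^{1+ε₀/4} ≥ c^{-1+x}·λ^{-nx}·μ(β) for |β| = n, where μ(β) denotes the μ⊗μ-mass factor μ(A_β) ≤ μ(β)·μ(β) relative to cylinder measures with A_β ⊆ β × β. Then liminf_{r→0} (1/2r)·∫_T ∫_Σ μ{τ : |π^t(θ) − π^t(τ)| ≤ r} dμ(θ) dt ≤ (C/2)·c^{x−1}·∑_{n≥0} λ^{nx} < ∞. -/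
/-!
For fixed `r > 0`, Fubini turns the double integral into the integral over `Σ × Σ` of the
parameter measure of `{t : |π^t θ - π^t τ| ≤ r}`. Off the null diagonal the pieces `A_β` cover
`Σ × Σ`; on `A_β` transversality bounds that measure by `C r / w(β)^{1+ε₀/4}`, and the Gibbs bound
on `μ(β)` absorbs the weight, leaving `μ(β) · C r c^{x-1} λ^{|β| x}`. Summing first over the words
of each length `n` (whose masses add up to at most `1`) and then over `n` gives
`C r c^{x-1} ∑ λ^{n x}` for every `r > 0`, which bounds the lim inf after dividing by `2 r`.
-/

open MeasureTheory Filter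
open scoped ENNReal

theorem summable_rpow_natCast_mul {lam x : ℝ} (hlam0 : 0 ≤ lam) (hlam1 : lam < 1) (hx : 0 < x) :
    Summable fun n : ℕ => lam ^ ((n : ℝ) * x) := by
  simp_rw [mul_comm _ x, Real.rpow_mul hlam0, Real.rpow_natCast]
  exact summable_geometric_of_lt_one (Real.rpow_nonneg hlam0 x) (Real.rpow_lt_one hlam0 hlam1 hx)

theorem ENNReal.tsum_ofReal_mul_left {ι : Type*} {g : ι → ℝ} (hg : ∀ i, 0 ≤ g i)
    (hsum : Summable g) (K : ℝ) :
    ∑' i, ENNReal.ofReal (K * g i) = ENNReal.ofReal (K * ∑' i, g i) := by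
  simp_rw [ENNReal.ofReal_mul' (hg _), ENNReal.tsum_mul_left,
    ENNReal.ofReal_mul' (tsum_nonneg hg), ENNReal.ofReal_tsum_of_nonneg hg hsum]

theorem ENNReal.tsum_mul_comp_le_tsum_of_fiber_le_one {B κ : Type*} (len : B → κ)
    (m : B → ℝ≥0∞) (g : κ → ℝ≥0∞) (hfiber : ∀ n, ∑' β : {b // len b = n}, m β ≤ 1) :
    ∑' β, m β * g (len β) ≤ ∑' n, g n :=
  calc ∑' β, m β * g (len β)
      = ∑' (n) (β : {b // len b = n}), m β * g n := by
        rw [← (Equiv.sigmaFiberEquiv len).tsum_eq, ENNReal.tsum_sigma']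
        exact tsum_congr fun n => tsum_congr fun β => by simp [Equiv.sigmaFiberEquiv, β.2]
    _ = ∑' n, (∑' β : {b // len b = n}, m β) * g n := by simp_rw [ENNReal.tsum_mul_right]
    _ ≤ ∑' n, g n :=
        ENNReal.tsum_le_tsum fun n => (mul_le_mul_left (hfiber n) _).trans (one_mul _).le

theorem ae_prod_self_mem_of_forall_ne {α : Type*} [MeasurableSpace α] {μ : Measure α}
    [SFinite μ] [NullSingletonClass μ] {s : Set (α × α)} (hs : MeasurableSet s)
    (hne : ∀ p : α × α, p.1 ≠ p.2 → p ∈ s) :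
    ∀ᵐ p ∂μ.prod μ, p ∈ s :=
  (Measure.ae_prod_mem_iff_ae_ae_mem hs).2 <|
    ae_of_all _ fun x => (μ.ae_ne x).mono fun y hy => hne (x, y) (Ne.symm hy)

theorem setLIntegral_le_mul_ofReal_of_le_div {α : Type*} [MeasurableSpace α] {μ : Measure α}
    {s : Set α} (hs : MeasurableSet s) {f : α → ℝ≥0∞} {m : ℝ≥0∞} {a b W : ℝ} (hW : 0 < W)
    (hb : 0 ≤ b) (hf : ∀ p ∈ s, f p ≤ ENNReal.ofReal (a / W)) (hμs : μ s ≤ m * m)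
    (hm : m ≤ ENNReal.ofReal (b * W)) :
    ∫⁻ p in s, f p ∂μ ≤ m * ENNReal.ofReal (a * b) :=
  calc ∫⁻ p in s, f p ∂μ
      ≤ ∫⁻ _ in s, ENNReal.ofReal (a / W) ∂μ := setLIntegral_mono' hs hf
    _ = ENNReal.ofReal (a / W) * μ s := setLIntegral_const _ _
    _ ≤ ENNReal.ofReal (a / W) * (m * ENNReal.ofReal (b * W)) := by
        gcongr; exact hμs.trans (by gcongr)
    _ = m * ENNReal.ofReal (a / W * (b * W)) := by
        rw [ENNReal.ofReal_mul' (p := a / W) (by positivity)]; ring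
    _ = m * ENNReal.ofReal (a * b) := by field_simp

theorem lintegral_lintegral_measure_abs_sub_le_eq {T Y : Type*} [MeasurableSpace T]
    [MeasurableSpace Y] (ν : Measure T) (μ : Measure Y) [SFinite ν] [SFinite μ]
    {π : T → Y → ℝ} (hπ : Measurable (Function.uncurry π)) (r : ℝ) :
    ∫⁻ t, ∫⁻ θ, μ {τ | |π t θ - π t τ| ≤ r} ∂μ ∂ν
      = ∫⁻ p, ν {t | |π t p.1 - π t p.2| ≤ r} ∂μ.prod μ := by
  have hE : MeasurableSet {q : T × Y × Y | |π q.1 q.2.1 - π q.1 q.2.2| ≤ r} :=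
    measurableSet_le (.abs <| .sub (hπ.comp (measurable_fst.prodMk measurable_snd.fst))
      (hπ.comp (measurable_fst.prodMk measurable_snd.snd))) measurable_const
  calc ∫⁻ t, ∫⁻ θ, μ {τ | |π t θ - π t τ| ≤ r} ∂μ ∂ν
      = ∫⁻ t, (μ.prod μ) (Prod.mk t ⁻¹' {q : T × Y × Y | |π q.1 q.2.1 - π q.1 q.2.2| ≤ r}) ∂ν :=
        lintegral_congr fun t => (Measure.prod_apply (hE.preimage measurable_prodMk_left)).symm
    _ = _ := by rw [← Measure.prod_apply hE, Measure.prod_apply_symm hE]; rfl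

theorem stmt6_general {T Y B : Type*} [MeasurableSpace T] [MeasurableSpace Y] [Countable B]
    (LebT : Measure T) [IsProbabilityMeasure LebT]
    (μ : Measure Y) [IsProbabilityMeasure μ]
    (π : T → Y → ℝ) (hπ : Measurable (Function.uncurry π))
    (A : B → Set (Y × Y)) (hA : ∀ β, MeasurableSet (A β))
    (len : B → ℕ) (w : B → ℝ) (hw : ∀ β, 0 < w β)
    (mc : B → ENNReal)
    (C c lam x ε₀ : ℝ) (hc : 1 < c)
    (hlam0 : 0 < lam) (hlam1 : lam < 1) (hx : 0 < x)
    (hatomless : ∀ θ : Y, μ {θ} = 0)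
    (hcover : ∀ p : Y × Y, p.1 ≠ p.2 → ∃ β, p ∈ A β)
    (hprod : ∀ β, (μ.prod μ) (A β) ≤ mc β * mc β)
    (hsum : ∀ n : ℕ, ∑' β : {b : B // len b = n}, mc (β : B) ≤ 1)
    (htrans : ∀ β, ∀ p ∈ A β, ∀ r : ℝ, 0 < r →
      LebT {t | |π t p.1 - π t p.2| ≤ r}
        ≤ ENNReal.ofReal (C * r / w β ^ ((1 : ℝ) + ε₀ / 4)))
    (hgibbs : ∀ β, mc β
        ≤ ENNReal.ofReal (c ^ (x - 1) * lam ^ ((len β : ℝ) * x)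
            * w β ^ ((1 : ℝ) + ε₀ / 4))) :
    Filter.liminf
      (fun r : ℝ =>
        (∫⁻ t, ∫⁻ θ, μ {τ | |π t θ - π t τ| ≤ r} ∂μ ∂LebT) / ENNReal.ofReal (2 * r))
      (nhdsWithin 0 (Set.Ioi 0))
    ≤ ENNReal.ofReal ((C / 2) * c ^ (x - 1) * ∑' n : ℕ, lam ^ ((n : ℝ) * x)) := by
  have : NullSingletonClass μ := ⟨hatomless⟩
  have hcovered : ∀ᵐ p ∂μ.prod μ, p ∈ ⋃ β, A β :=
    ae_prod_self_mem_of_forall_ne (.iUnion hA) fun p hp => Set.mem_iUnion.2 (hcover p hp)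
  refine liminf_le_of_frequently_le' (Eventually.frequently ?_)
  filter_upwards [self_mem_nhdsWithin] with r (hr : 0 < r)
  have hpiece : ∀ β, ∫⁻ p in A β, LebT {t | |π t p.1 - π t p.2| ≤ r} ∂μ.prod μ
      ≤ mc β * ENNReal.ofReal (C * r * c ^ (x - 1) * lam ^ ((len β : ℝ) * x)) := fun β => by
    simpa only [mul_assoc] using setLIntegral_le_mul_ofReal_of_le_div (hA β)
      (Real.rpow_pos_of_pos (hw β) _) (by positivity) (fun p hp => htrans β p hp r hr)
      (hprod β) (hgibbs β)
  have htotal : ∫⁻ t, ∫⁻ θ, μ {τ | |π t θ - π t τ| ≤ r} ∂μ ∂LebT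
      ≤ ENNReal.ofReal (C * r * c ^ (x - 1) * ∑' n : ℕ, lam ^ ((n : ℝ) * x)) := by
    rw [lintegral_lintegral_measure_abs_sub_le_eq LebT μ hπ, ← Measure.restrict_eq_self_of_ae_mem
      hcovered, ← ENNReal.tsum_ofReal_mul_left (fun n => by positivity)
      (summable_rpow_natCast_mul hlam0.le hlam1 hx)]
    exact (lintegral_iUnion_le _ _).trans <| (ENNReal.tsum_le_tsum hpiece).trans <|
      ENNReal.tsum_mul_comp_le_tsum_of_fiber_le_one len mc _ hsum
  calc _ ≤ ENNReal.ofReal (C * r * c ^ (x - 1) * ∑' n : ℕ, lam ^ ((n : ℝ) * x))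
        / ENNReal.ofReal (2 * r) := by gcongr
    _ = _ := by
      rw [← ENNReal.ofReal_div_of_pos (by positivity)]
      congr 1
      field_simp

/-- Core estimate of the Simon–Solomyak–Urbański-type argument: under the
transversality condition (i) and the Gibbs bound (ii), the lim inf as `r → 0⁺` of
`(1/2r) ∫∫ μ{τ : |π^t(θ) − π^t(τ)| ≤ r} dμ(θ) dt` is at most
`(C/2) c^{x−1} ∑_{n ≥ 0} λ^{n x} < ∞`. -/
theorem stmt6 {T Y B : Type*} [MeasurableSpace T] [MeasurableSpace Y] [Countable B]
    (LebT : Measure T) [IsProbabilityMeasure LebT]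
    (μ : Measure Y) [IsProbabilityMeasure μ]
    (π : T → Y → ℝ) (hπ : Measurable (Function.uncurry π))
    (A : B → Set (Y × Y)) (hA : ∀ β, MeasurableSet (A β))
    (len : B → ℕ) (w : B → ℝ) (hw : ∀ β, 0 < w β)
    (mc : B → ENNReal)
    (C c lam x ε₀ : ℝ) (hC : 0 < C) (hc : 1 < c)
    (hlam0 : 0 < lam) (hlam1 : lam < 1) (hx : 0 < x) (hε : 0 < ε₀)
    (hatomless : ∀ θ : Y, μ {θ} = 0)
    (hcover : ∀ p : Y × Y, p.1 ≠ p.2 → ∃ β, p ∈ A β)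
    (hdisj : Pairwise (Function.onFun Disjoint A))
    (hprod : ∀ β, (μ.prod μ) (A β) ≤ mc β * mc β)
    (hsum : ∀ n : ℕ, ∑' β : {b : B // len b = n}, mc (β : B) ≤ 1)
    (htrans : ∀ β, ∀ p ∈ A β, ∀ r : ℝ, 0 < r →
      LebT {t | |π t p.1 - π t p.2| ≤ r}
        ≤ ENNReal.ofReal (C * r / w β ^ ((1 : ℝ) + ε₀ / 4)))
    (hgibbs : ∀ β, mc β
        ≤ ENNReal.ofReal (c ^ (x - 1) * lam ^ ((len β : ℝ) * x)
            * w β ^ ((1 : ℝ) + ε₀ / 4))) :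
    Filter.liminf
      (fun r : ℝ =>
        (∫⁻ t, ∫⁻ θ, μ {τ | |π t θ - π t τ| ≤ r} ∂μ ∂LebT) / ENNReal.ofReal (2 * r))
      (nhdsWithin 0 (Set.Ioi 0))
    ≤ ENNReal.ofReal ((C / 2) * c ^ (x - 1) * ∑' n : ℕ, lam ^ ((n : ℝ) * x)) :=
  stmt6_general LebT μ π hπ A hA len w hw mc C c lam x ε₀ hc hlam0 hlam1 hx hatomless hcover hprod
    hsum htrans hgibbs
end

section
/- Let μ⁻ be a probability measure on one-sided infinite words Σ⁻ over a finite alphabet with the quasi-Bernoulli property: there exists Ĉ > 1 such that Ĉ^{-1} ≤ μ⁻(āb̄c̄b̄ē)/(μ⁻(ā)μ⁻(b̄)μ⁻(c̄)μ⁻(b̄)μ⁻(ē)) ≤ Ĉ for all admissible concatenations, and suppose μ⁻(b̄) ≤ C̄·ρ^{(c/k)·d} for every word b̄ of scale ρ^{c/k}, with d, c/k > 0. Let m = ⌈C̃·log(1/ρ)⌉ bound the length of words of scale ρ. Then the μ⁻-measure of the set of words of scale ρ containing a subword of scale ρ^{c/k} that repeats in two disjoint index intervals is at most (m+1)⁴·Ĉ·C̄·ρ^{(c/k)·d},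 which tends to 0 as ρ → 0. -/
/-!
A word `a ++ b ++ c ++ b ++ e` with a repeated factor `b` of scale `ρ^κ` is the image of the
quadruple `(a, b, c, e)`, whose factors again have length at most `M = ⌈C̃ log (1/ρ)⌉`. By the
quasi-Bernoulli property its mass is at most `Ĉ μ(a) μ(b) μ(c) μ(e) · C̄ ρ^{κ d}`, one copy of `b`
being bounded through its scale. Summing over all quadruples, each free factor contributes at most
the total mass `M + 1` of the words of length `≤ M`, since each length carries mass at most `1`.
-/

open scoped Classical

namespace Finset

lemma sum_biUnion_le_sum_sum {ι β M : Type*} [AddCommMonoid M] [Preorder M] [AddLeftMono M]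
    [DecidableEq β] {s : Finset ι} {t : ι → Finset β} {f : β → M}
    (hf : ∀ x ∈ s.biUnion t, 0 ≤ f x) :
    ∑ x ∈ s.biUnion t, f x ≤ ∑ i ∈ s, ∑ x ∈ t i, f x := by
  have hs : s.biUnion t = (s.sigma t).image Sigma.snd := by ext; simp
  calc ∑ x ∈ s.biUnion t, f x = ∑ x ∈ (s.sigma t).image Sigma.snd, f x := by rw [hs]
    _ ≤ ∑ p ∈ s.sigma t, f p.2 := sum_image_le_of_nonneg (hs ▸ hf)
    _ = ∑ i ∈ s, ∑ x ∈ t i, f x := sum_sigma _ _ _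

lemma sum_biUnion_le_card_of_sum_le_one {ι β : Type*} [DecidableEq β] (s : Finset ι)
    (t : ι → Finset β) {f : β → ℝ} (hf : ∀ x, 0 ≤ f x) (ht : ∀ i, ∑ x ∈ t i, f x ≤ 1) :
    ∑ x ∈ s.biUnion t, f x ≤ #s :=
  calc ∑ x ∈ s.biUnion t, f x ≤ ∑ i ∈ s, ∑ x ∈ t i, f x :=
        sum_biUnion_le_sum_sum fun x _ => hf x
    _ ≤ #s • (1 : ℝ) := sum_le_card_nsmul _ _ _ fun i _ => ht i
    _ = #s := nsmul_one _

lemma sum_product_four_eq_pow {β R : Type*} [CommSemiring R] (s : Finset β) (f : β → R) :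
    ∑ q ∈ s ×ˢ s ×ˢ s ×ˢ s, f q.1 * f q.2.1 * f q.2.2.1 * f q.2.2.2 = (∑ x ∈ s, f x) ^ 4 := by
  simp only [sum_product, ← sum_mul, ← mul_sum]
  ring

end Finset

open Finset

section Repeat

variable {α : Type*}

def repeatJoin (q : List α × List α × List α × List α) : List α :=
  q.1 ++ q.2.1 ++ q.2.2.1 ++ q.2.1 ++ q.2.2.2

lemma filter_exists_repeat_subset_image (V : Finset (List α))
    (hV : ∀ a b c e : List α, a ++ b ++ c ++ b ++ e ∈ V → a ∈ V ∧ b ∈ V ∧ c ∈ V ∧ e ∈ V)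
    (P : List α → Prop) :
    V.filter (fun w => ∃ a b c e : List α, w = a ++ b ++ c ++ b ++ e ∧ P b) ⊆
      ((V ×ˢ V ×ˢ V ×ˢ V).filter (fun q => P q.2.1)).image repeatJoin := by
  intro w hw
  obtain ⟨hwV, a, b, c, e, rfl, hPb⟩ := mem_filter.mp hw
  obtain ⟨ha, hb, hc, he⟩ := hV a b c e hwV
  exact mem_image.mpr ⟨(a, b, c, e), by simp [ha, hb, hc, he, hPb], rfl⟩

lemma sum_filter_exists_repeat_le (V : Finset (List α)) {m : List α → ℝ} (hm : ∀ w, 0 ≤ m w)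
    {C R : ℝ} (hC : 0 ≤ C) (hR : 0 ≤ R)
    (hQB : ∀ a b c e : List α, m (a ++ b ++ c ++ b ++ e) ≤ C * (m a * m b * m c * m b * m e))
    (P : List α → Prop) (hP : ∀ b, P b → m b ≤ R)
    (hV : ∀ a b c e : List α, a ++ b ++ c ++ b ++ e ∈ V → a ∈ V ∧ b ∈ V ∧ c ∈ V ∧ e ∈ V) :
    ∑ w ∈ V.filter (fun w => ∃ a b c e : List α, w = a ++ b ++ c ++ b ++ e ∧ P b), m w ≤
      C * R * (∑ w ∈ V, m w) ^ 4 := by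
  set f : List α × List α × List α × List α → ℝ :=
    fun q => m q.1 * m q.2.1 * m q.2.2.1 * m q.2.2.2
  have hf : ∀ q, 0 ≤ f q := fun q =>
    mul_nonneg (mul_nonneg (mul_nonneg (hm _) (hm _)) (hm _)) (hm _)
  have hjoin : ∀ q, P q.2.1 → m (repeatJoin q) ≤ C * R * f q := by
    rintro ⟨a, b, c, e⟩ hPb
    calc m (a ++ b ++ c ++ b ++ e) ≤ C * (m a * m b * m c * m b * m e) := hQB a b c e
      _ = C * m b * (m a * m b * m c * m e) := by ring
      _ ≤ C * R * (m a * m b * m c * m e) := by gcongr; exacts [hf (a, b, c, e), hP b hPb]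
  set Q := (V ×ˢ V ×ˢ V ×ˢ V).filter (fun q => P q.2.1)
  calc _ ≤ ∑ w ∈ Q.image repeatJoin, m w :=
        sum_le_sum_of_subset_of_nonneg (filter_exists_repeat_subset_image V hV P)
          fun w _ _ => hm w
    _ ≤ ∑ q ∈ Q, m (repeatJoin q) := sum_image_le_of_nonneg fun w _ => hm w
    _ ≤ ∑ q ∈ Q, C * R * f q := sum_le_sum fun q hq => hjoin q (mem_filter.mp hq).2
    _ ≤ ∑ q ∈ V ×ˢ V ×ˢ V ×ˢ V, C * R * f q :=
        sum_le_sum_of_subset_of_nonneg (filter_subset _ _)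
          fun q _ _ => mul_nonneg (mul_nonneg hC hR) (hf q)
    _ = C * R * (∑ w ∈ V, m w) ^ 4 := by rw [← mul_sum, sum_product_four_eq_pow]

lemma mem_biUnion_range_of_repeat_mem (W : ℕ → Finset (List α)) (N : ℕ)
    (hlenW : ∀ n, ∀ w ∈ W n, w.length = n)
    (hfactor : ∀ a b c e : List α,
      a ++ b ++ c ++ b ++ e ∈ W (a ++ b ++ c ++ b ++ e).length →
      a ∈ W a.length ∧ b ∈ W b.length ∧ c ∈ W c.length ∧ e ∈ W e.length)
    (a b c e : List α) (h : a ++ b ++ c ++ b ++ e ∈ (range N).biUnion W) :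
    a ∈ (range N).biUnion W ∧ b ∈ (range N).biUnion W ∧
      c ∈ (range N).biUnion W ∧ e ∈ (range N).biUnion W := by
  obtain ⟨n, hn, hw⟩ := mem_biUnion.mp h
  obtain rfl := hlenW n _ hw
  obtain ⟨ha, hb, hc, he⟩ := hfactor a b c e hw
  simp only [mem_range, List.length_append] at hn
  exact ⟨mem_biUnion.mpr ⟨_, mem_range.mpr (by omega), ha⟩,
    mem_biUnion.mpr ⟨_, mem_range.mpr (by omega), hb⟩,
    mem_biUnion.mpr ⟨_, mem_range.mpr (by omega), hc⟩,
    mem_biUnion.mpr ⟨_, mem_range.mpr (by omega), he⟩⟩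

end Repeat

theorem stmt10_general {α : Type*} (W : ℕ → Finset (List α)) (m : List α → ℝ)
    (SC : ℝ → List α → Prop)
    (Chat Cbar Ctil ρ κ d : ℝ)
    (hChat : 1 < Chat) (hCbar : 0 < Cbar)
    (hρ0 : 0 < ρ)
    (hm0 : ∀ w, 0 ≤ m w)
    (hQB : ∀ a b c e : List α,
      Chat⁻¹ * (m a * m b * m c * m b * m e) ≤ m (a ++ b ++ c ++ b ++ e) ∧
      m (a ++ b ++ c ++ b ++ e) ≤ Chat * (m a * m b * m c * m b * m e))
    (hscale : ∀ b : List α, SC (ρ ^ κ) b → m b ≤ Cbar * ρ ^ (κ * d))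
    (hsum : ∀ n : ℕ, ∑ w ∈ W n, m w ≤ 1)
    (hlenW : ∀ n, ∀ w ∈ W n, w.length = n)
    (hfactor : ∀ a b c e : List α,
      a ++ b ++ c ++ b ++ e ∈ W (a ++ b ++ c ++ b ++ e).length →
      a ∈ W a.length ∧ b ∈ W b.length ∧ c ∈ W c.length ∧ e ∈ W e.length) :
    ∑ w ∈ ((Finset.range (⌈Ctil * Real.log (1 / ρ)⌉₊ + 1)).biUnion W).filter
        (fun w => SC ρ w ∧
          ∃ a b c e : List α, w = a ++ b ++ c ++ b ++ e ∧ SC (ρ ^ κ) b),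
      m w
    ≤ ((⌈Ctil * Real.log (1 / ρ)⌉₊ : ℝ) + 1) ^ 4 * Chat * Cbar * ρ ^ (κ * d) := by
  set N := ⌈Ctil * Real.log (1 / ρ)⌉₊ + 1
  set V := (range N).biUnion W
  have hR : 0 ≤ Cbar * ρ ^ (κ * d) := mul_nonneg hCbar.le (Real.rpow_nonneg hρ0.le _)
  have hmass : ∑ w ∈ V, m w ≤ N := by
    simpa using sum_biUnion_le_card_of_sum_le_one (range N) W hm0 hsum
  calc _ ≤ ∑ w ∈ V.filter
            (fun w => ∃ a b c e : List α, w = a ++ b ++ c ++ b ++ e ∧ SC (ρ ^ κ) b), m w :=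
        sum_le_sum_of_subset_of_nonneg (monotone_filter_right _ fun _ _ h => h.2)
          fun w _ _ => hm0 w
    _ ≤ Chat * (Cbar * ρ ^ (κ * d)) * (∑ w ∈ V, m w) ^ 4 :=
        sum_filter_exists_repeat_le V hm0 (by linarith) hR (fun a b c e => (hQB a b c e).2)
          _ hscale (mem_biUnion_range_of_repeat_mem W N hlenW hfactor)
    _ ≤ Chat * (Cbar * ρ ^ (κ * d)) * (N : ℝ) ^ 4 := by
        gcongr
        exact sum_nonneg fun w _ => hm0 w
    _ = _ := by push_cast [N]; ring

/-- Quasi-Bernoulli estimate for recurrent leaves: the total mass of the words of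
scale `ρ` containing a subword of scale `ρ^κ` repeated in two disjoint index
intervals is at most `(m+1)⁴ Ĉ C̄ ρ^{κ d}`, where `m = ⌈C̃ log(1/ρ)⌉` bounds the
length of words of scale `ρ`. -/
theorem stmt10 {α : Type*} (W : ℕ → Finset (List α)) (m : List α → ℝ)
    (SC : ℝ → List α → Prop)
    (Chat Cbar Ctil ρ κ d : ℝ)
    (hChat : 1 < Chat) (hCbar : 0 < Cbar) (hCtil : 0 < Ctil)
    (hρ0 : 0 < ρ) (hρ1 : ρ < 1) (hκ : 0 < κ) (hd : 0 < d)
    (hm0 : ∀ w, 0 ≤ m w)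
    (hQB : ∀ a b c e : List α,
      Chat⁻¹ * (m a * m b * m c * m b * m e) ≤ m (a ++ b ++ c ++ b ++ e) ∧
      m (a ++ b ++ c ++ b ++ e) ≤ Chat * (m a * m b * m c * m b * m e))
    (hscale : ∀ b : List α, SC (ρ ^ κ) b → m b ≤ Cbar * ρ ^ (κ * d))
    (hsum : ∀ n : ℕ, ∑ w ∈ W n, m w ≤ 1)
    (hlenW : ∀ n, ∀ w ∈ W n, w.length = n)
    (hfactor : ∀ a b c e : List α,
      a ++ b ++ c ++ b ++ e ∈ W (a ++ b ++ c ++ b ++ e).length →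
      a ∈ W a.length ∧ b ∈ W b.length ∧ c ∈ W c.length ∧ e ∈ W e.length)
    (hlen : ∀ w : List α, SC ρ w → w.length ≤ ⌈Ctil * Real.log (1 / ρ)⌉₊) :
    ∑ w ∈ ((Finset.range (⌈Ctil * Real.log (1 / ρ)⌉₊ + 1)).biUnion W).filter
        (fun w => SC ρ w ∧
          ∃ a b c e : List α, w = a ++ b ++ c ++ b ++ e ∧ SC (ρ ^ κ) b),
      m w
    ≤ ((⌈Ctil * Real.log (1 / ρ)⌉₊ : ℝ) + 1) ^ 4 * Chat * Cbar * ρ ^ (κ * d) :=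
  stmt10_general W m SC Chat Cbar Ctil ρ κ d hChat hCbar hρ0 hm0 hQB hscale hsum hlenW hfactor
end
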